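/- arXiv:1407.7127 — 4 statements merged into one kernel-verified Lean document; each statement's English description precedes it below -/
import Mathlib

section
/- Let H be a (finite-dimensional complex) Hilbert space and L₁ a bounded operator on H that generates a contraction semigroup (i.e., Re L₁ ≤ 0 in the sense that Re(x, L₁x) ≤ 0 for all x). Then ker L₁ ∩ ran L₁ = {0}. -/
/-!
If `L x = 0` with `x = L y`, then along the line `y + t x` the operator sees the constant vector `x`,
so `Re ⟪y + t x, L (y + t x)⟫ = Re ⟪y, x⟫ + t ‖x‖²`. This affine function of `t` stays `≤ 0` for all
real `t` only if its slope `‖x‖²` vanishes.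
-/

open scoped InnerProductSpace
open RCLike

lemma eq_zero_of_forall_add_mul_nonpos {a b : ℝ} (hb : 0 ≤ b) (h : ∀ t : ℝ, a + t * b ≤ 0) :
    b = 0 := by
  by_contra hb0
  have hpos : 0 < b := lt_of_le_of_ne hb (Ne.symm hb0)
  have := h ((1 - a) / b)
  rw [div_mul_cancel₀ _ hpos.ne'] at this
  linarith

namespace LinearMap

variable {𝕜 E : Type*} [RCLike 𝕜] [NormedAddCommGroup E] [InnerProductSpace 𝕜 E]

lemma re_inner_add_smul_apply_of_apply_apply_eq_zero {L : E →ₗ[𝕜] E} {y : E} (hy : L (L y) = 0)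
    (t : ℝ) :
    re ⟪y + (t : 𝕜) • L y, L (y + (t : 𝕜) • L y)⟫_𝕜 = re ⟪y, L y⟫_𝕜 + t * ‖L y‖ ^ 2 := by
  rw [map_add, map_smul, hy, smul_zero, add_zero, inner_add_left, inner_smul_real_left,
    map_add, smul_re, inner_self_eq_norm_sq]

theorem ker_inf_range_eq_bot_of_forall_re_inner_nonpos (L : E →ₗ[𝕜] E)
    (hdiss : ∀ x : E, re ⟪x, L x⟫_𝕜 ≤ 0) : ker L ⊓ range L = ⊥ := by
  rw [eq_bot_iff]
  rintro x ⟨hx, y, rfl⟩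
  have hslope : ‖L y‖ ^ 2 = 0 := eq_zero_of_forall_add_mul_nonpos (by positivity) fun t => by
    have := hdiss (y + (t : 𝕜) • L y)
    rwa [re_inner_add_smul_apply_of_apply_apply_eq_zero hx] at this
  simpa using hslope

end LinearMap

theorem ker_inf_range_eq_bot_of_dissipative_general
    {H : Type*} [NormedAddCommGroup H] [InnerProductSpace ℂ H]
    (L₁ : H →L[ℂ] H)
    (hdiss : ∀ x : H, (⟪x, L₁ x⟫_ℂ).re ≤ 0) :
    LinearMap.ker (L₁ : H →ₗ[ℂ] H) ⊓ LinearMap.range (L₁ : H →ₗ[ℂ] H) = ⊥ :=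
  (L₁ : H →ₗ[ℂ] H).ker_inf_range_eq_bot_of_forall_re_inner_nonpos hdiss

/-- If `L₁` is a dissipative operator (`Re ⟪x, L₁ x⟫ ≤ 0` for all `x`, i.e. `L₁` generates a
contraction semigroup) on a finite-dimensional complex Hilbert space, then
`ker L₁ ∩ ran L₁ = {0}`. -/
theorem ker_inf_range_eq_bot_of_dissipative
    {H : Type*} [NormedAddCommGroup H] [InnerProductSpace ℂ H] [FiniteDimensional ℂ H]
    (L₁ : H →L[ℂ] H)
    (hdiss : ∀ x : H, (⟪x, L₁ x⟫_ℂ).re ≤ 0) :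
    LinearMap.ker (L₁ : H →ₗ[ℂ] H) ⊓ LinearMap.range (L₁ : H →ₗ[ℂ] H) = ⊥ :=
  ker_inf_range_eq_bot_of_dissipative_general L₁ hdiss
end

section
/- Let H be a finite-dimensional complex Hilbert space and L₁ a dissipative operator (Re(x, L₁x) ≤ 0 for all x) such that 0 is an isolated eigenvalue of L₁. Then H decomposes as the direct sum H = ker L₁ ⊕ ran L₁. -/
open scoped InnerProductSpace ComplexConjugate

/-! Dissipativity forces `ker T ⟂ range T`: if `T x = 0` and `a = ⟪x, T y⟫`, then testing
dissipativity on `x + t • conj a • y` gives `t ‖a‖² + t² ‖a‖² re ⟪y, T y⟫ ≤ 0` for every real `t`,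
which is only possible if `a = 0`. Counting dimensions upgrades `ker T ≤ (range T)ᗮ` to an
equality in finite dimension, and a subspace is complementary to its orthogonal complement. -/

namespace LinearMap

variable {𝕜 E : Type*} [RCLike 𝕜] [NormedAddCommGroup E] [InnerProductSpace 𝕜 E]

def IsDissipative (T : E →ₗ[𝕜] E) : Prop :=
  ∀ x, RCLike.re ⟪x, T x⟫_𝕜 ≤ 0

namespace IsDissipative

variable {T : E →ₗ[𝕜] E}

theorem inner_map_eq_zero_of_map_eq_zero (hT : T.IsDissipative) {x : E} (hx : T x = 0) (y : E) :
    ⟪x, T y⟫_𝕜 = 0 := by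
  set a := ⟪x, T y⟫_𝕜
  have hquad : ∀ t : ℝ, 0 ≤ (-(‖a‖ ^ 2 * RCLike.re ⟪y, T y⟫_𝕜)) * (t * t) + -‖a‖ ^ 2 * t + 0 := by
    intro t
    have h := hT (x + ((t : 𝕜) * conj a) • y)
    simp only [map_add, map_smul, hx, zero_add, inner_add_left, inner_smul_left,
      inner_smul_right, map_mul, RCLike.conj_conj, RCLike.conj_ofReal] at h
    have hexpand : (t : 𝕜) * conj a * (a + t * a * ⟪y, T y⟫_𝕜)
        = ((t * ‖a‖ ^ 2 : ℝ) : 𝕜) * (1 + t * ⟪y, T y⟫_𝕜) := by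
      push_cast
      rw [← RCLike.conj_mul]
      ring
    rw [hexpand, RCLike.re_ofReal_mul, map_add, RCLike.one_re, RCLike.re_ofReal_mul] at h
    nlinarith
  have hdisc := discrim_le_zero hquad
  norm_num [discrim] at hdisc
  exact hdisc

theorem ker_le_orthogonal_range (hT : T.IsDissipative) : ker T ≤ (range T)ᗮ := by
  rintro x hx _ ⟨y, rfl⟩
  exact inner_eq_zero_symm.mp (hT.inner_map_eq_zero_of_map_eq_zero hx y)

theorem ker_eq_orthogonal_range [FiniteDimensional 𝕜 E] (hT : T.IsDissipative) :
    ker T = (range T)ᗮ :=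
  Submodule.eq_of_le_of_finrank_eq hT.ker_le_orthogonal_range <| by
    have := (range T).finrank_add_finrank_orthogonal
    have := T.finrank_range_add_finrank_ker
    omega

theorem isCompl_ker_range [FiniteDimensional 𝕜 E] (hT : T.IsDissipative) :
    IsCompl (ker T) (range T) :=
  hT.ker_eq_orthogonal_range ▸ (range T).isCompl_orthogonal.symm

end IsDissipative

end LinearMap

theorem isCompl_ker_range_of_dissipative_isolated_general
    {H : Type*} [NormedAddCommGroup H] [InnerProductSpace ℂ H] [FiniteDimensional ℂ H]
    (L₁ : H →L[ℂ] H)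
    (hdiss : ∀ x : H, (⟪x, L₁ x⟫_ℂ).re ≤ 0) :
    IsCompl (LinearMap.ker (L₁ : H →ₗ[ℂ] H)) (LinearMap.range (L₁ : H →ₗ[ℂ] H)) :=
  LinearMap.IsDissipative.isCompl_ker_range hdiss

/-- If `L₁` is dissipative on a finite-dimensional complex Hilbert space and `0` is an
isolated point of its spectrum (no eigenvalue `λ` with `0 < |λ| < δ`), then
`H = ker L₁ ⊕ ran L₁`. -/
theorem isCompl_ker_range_of_dissipative_isolated
    {H : Type*} [NormedAddCommGroup H] [InnerProductSpace ℂ H] [FiniteDimensional ℂ H]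
    (L₁ : H →L[ℂ] H)
    (hdiss : ∀ x : H, (⟪x, L₁ x⟫_ℂ).re ≤ 0)
    (hiso : ∃ δ : ℝ, 0 < δ ∧ ∀ lam : ℂ, lam ∈ spectrum ℂ L₁ →
      0 < ‖lam‖ → ‖lam‖ < δ → False) :
    IsCompl (LinearMap.ker (L₁ : H →ₗ[ℂ] H)) (LinearMap.range (L₁ : H →ₗ[ℂ] H)) :=
  isCompl_ker_range_of_dissipative_isolated_general L₁ hdiss
end

section
/- Let P(s), s ∈ [0,1], be a C¹ family of projections on a finite-dimensional normed space, and let T(s,s') be the solution of ∂ₛ T(s,s') = [Ṗ(s), P(s)] T(s,s') with T(s',s') = 1. Then the intertwining property T(s,s') P(s') = P(s) T(s,s') holds for all s, s'. -/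
/-!
Differentiating `P² = P` gives `Ṗ P + P Ṗ = Ṗ`, hence `P Ṗ P = 0` and `Ṗ = [[Ṗ, P], P]`:
the family `P` obeys the Lax equation `Ṗ = [A, P]` for the generator `A = [Ṗ, P]` of `T`.
Consequently the defect `F(s) = P(s) T(s,s') - T(s,s') P(s')` solves the same linear equation
`Ḟ = A F` as `T`, with `F(s') = 0`, so it vanishes identically by uniqueness for linear ODEs
with continuous coefficients.
-/

open Set

theorem IsIdempotentElem.commutator_commutator_eq {R : Type*} [Ring R] {p d : R}
    (hp : IsIdempotentElem p) (hd : d * p + p * d = d) :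
    (d * p - p * d) * p - p * (d * p - p * d) = d := by
  have hpdp : p * d * p = 0 := by
    have h := congrArg (p * ·) hd
    simp only [mul_add, ← mul_assoc, hp.eq] at h
    exact add_eq_right.mp h
  calc (d * p - p * d) * p - p * (d * p - p * d)
      = d * (p * p) - p * d * p - (p * d * p - p * p * d) := by noncomm_ring
    _ = d * p + p * d := by rw [hpdp, hp.eq]; abel
    _ = d := hd

theorem HasDerivAt.mul_add_mul_eq_of_isIdempotentElem {𝕜 𝔸 : Type*}
    [NontriviallyNormedField 𝕜] [NormedRing 𝔸] [NormedAlgebra 𝕜 𝔸] {P : 𝕜 → 𝔸} {P' : 𝔸} {x : 𝕜}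
    (hP : HasDerivAt P P' x) (hproj : ∀ y, IsIdempotentElem (P y)) :
    P' * P x + P x * P' = P' := by
  have hPP : HasDerivAt (fun y => P y * P y) (P' * P x + P x * P') x := hP.fun_mul hP
  simp only [fun y => (hproj y).eq] at hPP
  exact hPP.unique hP

theorem HasDerivAt.mul_sub_mul_const_of_commutator {𝕜 𝔸 : Type*}
    [NontriviallyNormedField 𝕜] [NormedRing 𝔸] [NormedAlgebra 𝕜 𝔸] {P T : 𝕜 → 𝔸} {a : 𝔸} {x : 𝕜}
    (hP : HasDerivAt P (a * P x - P x * a) x) (hT : HasDerivAt T (a * T x) x) (q : 𝔸) :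
    HasDerivAt (fun y => P y * T y - T y * q) (a * (P x * T x - T x * q)) x :=
  ((hP.fun_mul hT).sub (hT.mul_const q)).congr_deriv (by noncomm_ring)

theorem eq_zero_of_hasDerivAt_clm_apply {E : Type*} [NormedAddCommGroup E] [NormedSpace ℝ E]
    {A : ℝ → E →L[ℝ] E} {f : ℝ → E} {t₀ : ℝ} (hA : Continuous A)
    (hf : ∀ t, HasDerivAt f (A t (f t)) t) (hf₀ : f t₀ = 0) (t : ℝ) : f t = 0 := by
  set a := min t t₀ - 1
  set b := max t t₀ + 1
  obtain ⟨C, hC⟩ :=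
    (isCompact_Icc (a := a) (b := b)).exists_bound_of_continuousOn hA.continuousOn
  have hlip : ∀ u ∈ Ioo a b, LipschitzOnWith C.toNNReal (A u) univ := fun u hu =>
    ((A u).lipschitz.weaken (by
      rw [← NNReal.coe_le_coe, coe_nnnorm]
      exact (hC u (Ioo_subset_Icc_self hu)).trans (Real.le_coe_toNNReal C))).lipschitzOnWith
  have hmem : ∀ u ∈ Icc (min t t₀) (max t t₀), u ∈ Ioo a b := fun u hu =>
    ⟨by linarith [hu.1], by linarith [hu.2]⟩
  have hzero : EqOn f 0 (Ioo a b) :=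
    ODE_solution_unique_of_mem_Ioo hlip (hmem t₀ ⟨min_le_right .., le_max_right ..⟩)
      (fun u _ => ⟨hf u, mem_univ _⟩) (fun u _ => ⟨by simp, mem_univ _⟩) hf₀
  exact hzero (hmem t ⟨min_le_left .., le_max_left ..⟩)

theorem parallel_transport_intertwines_general
    {B : Type*} [NormedAddCommGroup B] [NormedSpace ℝ B]
    (P P' : ℝ → (B →L[ℝ] B))
    (hproj : ∀ s, (P s) ∘L (P s) = P s)
    (hP : ∀ s, HasDerivAt P (P' s) s)
    (hP' : Continuous P')
    (T : ℝ → ℝ → (B →L[ℝ] B))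
    (hT0 : ∀ s', T s' s' = 1)
    (hT : ∀ s s' : ℝ, HasDerivAt (fun u => T u s')
      ((P' s ∘L P s - P s ∘L P' s) ∘L T s s') s) :
    ∀ s s' : ℝ, (T s s') ∘L (P s') = (P s) ∘L (T s s') := by
  intro s s'
  set A : ℝ → B →L[ℝ] B := fun u => P' u * P u - P u * P' u
  have hA : Continuous A := by
    have hPc : Continuous P := continuous_iff_continuousAt.2 fun u => (hP u).continuousAt
    exact (hP'.mul hPc).sub (hPc.mul hP')
  have hlax : ∀ u, HasDerivAt P (A u * P u - P u * A u) u := fun u => by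
    rw [IsIdempotentElem.commutator_commutator_eq (hproj u)
      ((hP u).mul_add_mul_eq_of_isIdempotentElem hproj)]
    exact hP u
  have hdefect := eq_zero_of_hasDerivAt_clm_apply (t₀ := s')
    (A := fun u => ContinuousLinearMap.mul ℝ _ (A u))
    ((ContinuousLinearMap.mul ℝ _).continuous.comp hA)
    (fun u => (hlax u).mul_sub_mul_const_of_commutator (hT u s') (P s')) (by simp [hT0]) s
  exact (sub_eq_zero.1 hdefect).symm

/-- Intertwining property of parallel transport: if `P` is a `C¹` family of projections on a
finite-dimensional normed space and `T (·, s')` solves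
`∂ₛ T(s,s') = [Ṗ(s), P(s)] T(s,s')`, `T(s',s') = 1`, then
`T(s,s') P(s') = P(s) T(s,s')`. -/
theorem parallel_transport_intertwines
    {B : Type*} [NormedAddCommGroup B] [NormedSpace ℝ B] [FiniteDimensional ℝ B]
    (P P' : ℝ → (B →L[ℝ] B))
    (hproj : ∀ s, (P s) ∘L (P s) = P s)
    (hP : ∀ s, HasDerivAt P (P' s) s)
    (hP' : Continuous P')
    (T : ℝ → ℝ → (B →L[ℝ] B))
    (hT0 : ∀ s', T s' s' = 1)
    (hT : ∀ s s' : ℝ, HasDerivAt (fun u => T u s')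
      ((P' s ∘L P s - P s ∘L P' s) ∘L T s s') s) :
    ∀ s s' : ℝ, (T s s') ∘L (P s') = (P s) ∘L (T s s') :=
  parallel_transport_intertwines_general P P' hproj hP hP' T hT0 hT
end

section
/- Let P(s) be a C¹ family of projections and T(s,s') the associated parallel transport (solution of ∂ₛT = [Ṗ(s),P(s)]T, T(s',s') = 1). If x(s) = T(s,s') x(s') with x(s') ∈ ran P(s'), then P(s) ẋ(s) = 0 for all s. -/
/-!
Differentiating `P² = P` gives `Ṗ = ṖP + PṖ`, hence `PṖP = 0`. With this, the deviation
`y = x - Px` of a solution `ẋ = [Ṗ, P] x` from `ran P` obeys the linear equation `ẏ = -Ṗ y`;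
since `y` vanishes at `s'`, uniqueness for linear ODEs gives `x(s) ∈ ran P(s)` for all `s`,
and then `P ẋ = PṖPx - PṖx = 0`.
-/

open Set

theorem mul_deriv_mul_eq_zero_of_isIdempotentElem {𝕜 R : Type*} [NontriviallyNormedField 𝕜]
    [NormedRing R] [NormedAlgebra 𝕜 R] {p : 𝕜 → R} {p' : R} {t : 𝕜}
    (hp : ∀ u, IsIdempotentElem (p u)) (hd : HasDerivAt p p' t) :
    p t * p' * p t = 0 := by
  have hleibniz : p' * p t + p t * p' = p' := by
    have hsq := hd.mul hd
    rw [show p * p = p from funext hp] at hsq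
    exact hsq.unique hd
  calc p t * p' * p t = (p' * p t + p t * p') * p t - p' * p t := by
        rw [add_mul, mul_assoc p', (hp t).eq]; abel
    _ = 0 := by rw [hleibniz, sub_self]

theorem ODE_linear_solution_eq_zero {E : Type*} [NormedAddCommGroup E] [NormedSpace ℝ E]
    {A : ℝ → E →L[ℝ] E} (hA : Continuous A) {y : ℝ → E}
    (hy : ∀ t, HasDerivAt y (A t (y t)) t) {t₀ : ℝ} (h₀ : y t₀ = 0) (t : ℝ) : y t = 0 := by
  set a := min t₀ t - 1
  set b := max t₀ t + 1
  obtain ⟨C, hC⟩ := isCompact_Icc.exists_bound_of_continuousOn (s := Icc a b) hA.continuousOn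
  have hlip : ∀ u ∈ Ioo a b, LipschitzOnWith C.toNNReal (A u) univ := fun u hu =>
    ((A u).lipschitz.weaken
      (NNReal.le_toNNReal_of_coe_le (hC u (Ioo_subset_Icc_self hu)))).lipschitzOnWith
  have hzero : ∀ u ∈ Ioo a b, HasDerivAt (fun _ => (0 : E)) (A u 0) u ∧ (0 : E) ∈ univ :=
    fun u _ => ⟨by simpa using hasDerivAt_const u (0 : E), trivial⟩
  exact ODE_solution_unique_of_mem_Ioo hlip
    ⟨by linarith [min_le_left t₀ t], by linarith [le_max_left t₀ t]⟩
    (fun u _ => ⟨hy u, trivial⟩) hzero h₀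
    ⟨by linarith [min_le_right t₀ t], by linarith [le_max_right t₀ t]⟩

section ParallelTransport

variable {E : Type*} [NormedAddCommGroup E] [NormedSpace ℝ E] {P P' : ℝ → E →L[ℝ] E}
  {x : ℝ → E}

theorem hasDerivAt_sub_apply_of_hasDerivAt_commutator (hproj : ∀ s, IsIdempotentElem (P s))
    {t : ℝ} (hP : HasDerivAt P (P' t) t)
    (hx : HasDerivAt x ((P' t ∘L P t - P t ∘L P' t) (x t)) t) :
    HasDerivAt (fun s => x s - P s (x s)) (-P' t (x t - P t (x t))) t := by
  have hPP'P := congrArg (· (x t)) (mul_deriv_mul_eq_zero_of_isIdempotentElem hproj hP)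
  have hPP := congrArg (· (P' t (x t))) (hproj t).eq
  refine (hx.sub (hP.clm_apply hx)).congr_deriv ?_
  simp only [mul_apply_eq_comp, zero_apply, ContinuousLinearMap.comp_apply,
    sub_apply, map_sub] at hPP'P hPP ⊢
  rw [hPP'P, hPP]
  abel

theorem apply_eq_self_of_hasDerivAt_commutator (hproj : ∀ s, IsIdempotentElem (P s))
    (hP : ∀ s, HasDerivAt P (P' s) s) (hP' : Continuous P')
    (hx : ∀ s, HasDerivAt x ((P' s ∘L P s - P s ∘L P' s) (x s)) s)
    {s₀ : ℝ} (h₀ : P s₀ (x s₀) = x s₀) (s : ℝ) : P s (x s) = x s :=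
  (sub_eq_zero.mp <| ODE_linear_solution_eq_zero hP'.neg
    (fun t => hasDerivAt_sub_apply_of_hasDerivAt_commutator hproj (hP t) (hx t))
    (sub_eq_zero.mpr h₀.symm) s).symm

end ParallelTransport

theorem parallel_section_covariant_deriv_zero_general
    {B : Type*} [NormedAddCommGroup B] [NormedSpace ℝ B]
    (P P' : ℝ → (B →L[ℝ] B))
    (hproj : ∀ s, (P s) ∘L (P s) = P s)
    (hP : ∀ s, HasDerivAt P (P' s) s)
    (hP' : Continuous P')
    (T : ℝ → ℝ → (B →L[ℝ] B))
    (hT0 : ∀ s', T s' s' = 1)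
    (hT : ∀ s s' : ℝ, HasDerivAt (fun u => T u s')
      ((P' s ∘L P s - P s ∘L P' s) ∘L T s s') s)
    (s' : ℝ) (x₀ : B) (hx₀ : x₀ ∈ LinearMap.range (P s' : B →ₗ[ℝ] B))
    (x x' : ℝ → B)
    (hxdef : ∀ s, x s = T s s' x₀)
    (hx : ∀ s, HasDerivAt x (x' s) s) :
    ∀ s, P s (x' s) = 0 := by
  have hPP : ∀ s y, P s (P s y) = P s y := fun s y => congrArg (· y) (hproj s)
  have hparallel : ∀ s, HasDerivAt x ((P' s ∘L P s - P s ∘L P' s) (x s)) s := fun s => by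
    simpa only [← hxdef, ContinuousLinearMap.comp_apply, map_zero, add_zero] using
      (hT s s').clm_apply (hasDerivAt_const s x₀)
  have hstart : P s' (x s') = x s' := by
    obtain ⟨y, rfl⟩ := hx₀
    rw [hxdef s', hT0]
    exact hPP s' y
  intro s
  have hrange := apply_eq_self_of_hasDerivAt_commutator hproj hP hP' hparallel hstart s
  rw [(hx s).unique (hparallel s)]
  calc P s ((P' s ∘L P s - P s ∘L P' s) (x s))
      = P s (P' s (P s (x s))) - P s (P s (P' s (x s))) := map_sub _ _ _
    _ = 0 := by rw [hrange, hPP, sub_self]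

/-- A parallel section has zero covariant derivative: if `P` is a `C¹` family of projections,
`T` the associated parallel transport (`∂ₛT = [Ṗ(s),P(s)]T`, `T(s',s') = 1`) and
`x(s) = T(s,s') x₀` with `x₀ ∈ ran P(s')`, then `P(s) ẋ(s) = 0` for all `s`. -/
theorem parallel_section_covariant_deriv_zero
    {B : Type*} [NormedAddCommGroup B] [NormedSpace ℝ B] [FiniteDimensional ℝ B]
    (P P' : ℝ → (B →L[ℝ] B))
    (hproj : ∀ s, (P s) ∘L (P s) = P s)
    (hP : ∀ s, HasDerivAt P (P' s) s)
    (hP' : Continuous P')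
    (T : ℝ → ℝ → (B →L[ℝ] B))
    (hT0 : ∀ s', T s' s' = 1)
    (hT : ∀ s s' : ℝ, HasDerivAt (fun u => T u s')
      ((P' s ∘L P s - P s ∘L P' s) ∘L T s s') s)
    (s' : ℝ) (x₀ : B) (hx₀ : x₀ ∈ LinearMap.range (P s' : B →ₗ[ℝ] B))
    (x x' : ℝ → B)
    (hxdef : ∀ s, x s = T s s' x₀)
    (hx : ∀ s, HasDerivAt x (x' s) s) :
    ∀ s, P s (x' s) = 0 :=
  parallel_section_covariant_deriv_zero_general P P' hproj hP hP' T hT0 hT s' x₀ hx₀ x x' hxdef hx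
end
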